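/- arXiv:1407.8421 — 11 statements merged into one kernel-verified Lean document; each statement's English description precedes it below -/
import Mathlib

section
/- For every integer k ≥ 0 and every p ∈ [0,1), there exists a unique x ∈ (0,1) such that f_k(x,p) = 0. In particular the sequence (p_k) is well-defined. -/
/-- `B r s p = ∑_{i=0}^{s-1} C(r,i) p^{r-i} (1-p)^i`, the probability that a
Binomial(r,p) random variable exceeds `r - s`. -/
noncomputable def B (r s : ℕ) (p : ℝ) : ℝ :=
  ∑ i ∈ Finset.range s, (r.choose i : ℝ) * p ^ (r - i) * (1 - p) ^ i

/-- `f k (x, p) = (k+1) B_{r,s}(p) - k B_{r,s}(x) - 2x + 1`. -/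
noncomputable def f (r s k : ℕ) (x p : ℝ) : ℝ :=
  ((k : ℝ) + 1) * B r s p - (k : ℝ) * B r s x - 2 * x + 1

/-!
`f_k(·, p) = 0` says `k B(x) + 2x = (k+1) B(p) + 1`. The left side is continuous and strictly
increasing on `[0,1]`, since `B' (x) = s C(r,s) x^(r-s) (1-x)^(s-1)` telescopes to a single
nonnegative term, and it runs from `0` to `k + 2`; the right side lies in `[1, k+2)` because
`0 = B(0) ≤ B(p) < B(1) = 1`. The intermediate value theorem and injectivity finish the proof.
-/

open Set

/-- The `i`-th term of `B r s` has derivative `D (i+1) - D i` with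
`D j = j C(r,j) x^(r-j) (1-x)^(j-1)`, so the derivative of the sum telescopes. -/
lemma hasDerivAt_binomial_term {r i : ℕ} (hir : i < r) (x : ℝ) :
    HasDerivAt (fun y : ℝ => (r.choose i : ℝ) * y ^ (r - i) * (1 - y) ^ i)
      (((i + 1 : ℕ) : ℝ) * (r.choose (i + 1) : ℝ) * x ^ (r - (i + 1)) * (1 - x) ^ (i + 1 - 1) -
        (i : ℝ) * (r.choose i : ℝ) * x ^ (r - i) * (1 - x) ^ (i - 1)) x := by
  have hpow : HasDerivAt (fun y : ℝ => (r.choose i : ℝ) * y ^ (r - i))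
      ((r.choose i : ℝ) * (((r - i : ℕ) : ℝ) * x ^ (r - i - 1))) x :=
    (hasDerivAt_pow (r - i) x).const_mul _
  have hcompl : HasDerivAt (fun y : ℝ => (1 - y) ^ i) ((i : ℝ) * (1 - x) ^ (i - 1) * (-1)) x := by
    simpa using ((hasDerivAt_id x).const_sub (1 : ℝ)).fun_pow i
  refine (hpow.fun_mul hcompl).congr_deriv ?_
  have hchoose : (r.choose (i + 1) : ℝ) * ((i : ℝ) + 1) = (r.choose i : ℝ) * ((r : ℝ) - i) := by
    have := congrArg (Nat.cast : ℕ → ℝ) (Nat.choose_succ_right_eq r i)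
    push_cast [Nat.cast_sub hir.le] at this
    exact this
  rw [show r - (i + 1) = r - i - 1 by omega, Nat.cast_sub hir.le, Nat.add_sub_cancel]
  push_cast
  linear_combination (-(x ^ (r - i - 1) * (1 - x) ^ i)) * hchoose

lemma hasDerivAt_B {r s : ℕ} (hrs : s ≤ r) (x : ℝ) :
    HasDerivAt (B r s) ((s : ℝ) * (r.choose s : ℝ) * x ^ (r - s) * (1 - x) ^ (s - 1)) x := by
  have hterms := HasDerivAt.fun_sum fun i (hi : i ∈ Finset.range s) =>
    hasDerivAt_binomial_term (lt_of_lt_of_le (Finset.mem_range.mp hi) hrs) x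
  rw [Finset.sum_range_sub (fun j : ℕ => (j : ℝ) * (r.choose j : ℝ) * x ^ (r - j) * (1 - x) ^ (j - 1))]
    at hterms
  unfold B
  simpa using hterms

lemma B_zero {r s : ℕ} (hrs : s ≤ r) : B r s 0 = 0 :=
  Finset.sum_eq_zero fun i hi => by
    rw [zero_pow (Nat.sub_ne_zero_of_lt (lt_of_lt_of_le (Finset.mem_range.mp hi) hrs))]
    ring

lemma B_one {r s : ℕ} (hs : 1 ≤ s) : B r s 1 = 1 := by
  rw [B, Finset.sum_eq_single_of_mem 0 (Finset.mem_range.mpr hs)]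
  · simp
  · intro i _ hi
    simp [zero_pow hi]

lemma continuous_B (r s : ℕ) : Continuous (B r s) := by
  unfold B
  fun_prop

lemma strictMonoOn_B {r s : ℕ} (hs : 1 ≤ s) (hrs : s ≤ r) : StrictMonoOn (B r s) (Icc 0 1) := by
  refine strictMonoOn_of_deriv_pos (convex_Icc 0 1) (continuous_B r s).continuousOn fun x hx => ?_
  rw [interior_Icc] at hx
  have hx1 : 0 < 1 - x := sub_pos.mpr hx.2
  have hchoose : (0 : ℝ) < r.choose s := by exact_mod_cast Nat.choose_pos hrs
  have hs' : (0 : ℝ) < s := by exact_mod_cast hs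
  rw [(hasDerivAt_B hrs x).deriv]
  exact mul_pos (mul_pos (mul_pos hs' hchoose) (pow_pos hx.1 _)) (pow_pos hx1 _)

lemma existsUnique_mem_Ioo_eq_of_strictMonoOn {g : ℝ → ℝ} {a b c : ℝ} (hab : a ≤ b)
    (hcont : ContinuousOn g (Icc a b)) (hmono : StrictMonoOn g (Icc a b))
    (hc : c ∈ Ioo (g a) (g b)) : ∃! x, x ∈ Ioo a b ∧ g x = c := by
  obtain ⟨x, hx, hgx⟩ := intermediate_value_Ioo hab hcont hc
  refine ⟨x, ⟨hx, hgx⟩, fun y ⟨hy, hgy⟩ => ?_⟩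
  exact hmono.injOn (Ioo_subset_Icc_self hy) (Ioo_subset_Icc_self hx) (hgy.trans hgx.symm)

/-- For every `k ≥ 0` and every `p ∈ [0,1)`, there is a unique `x ∈ (0,1)` with
`f_k(x,p) = 0`. -/
theorem stmt_0 (r s : ℕ) (hs : 1 ≤ s) (hrs : s ≤ r) (k : ℕ) (p : ℝ)
    (hp : p ∈ Set.Ico (0 : ℝ) 1) :
    ∃! x : ℝ, x ∈ Set.Ioo (0 : ℝ) 1 ∧ f r s k x p = 0 := by
  obtain ⟨hp0, hp1⟩ := hp
  have hB := strictMonoOn_B hs hrs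
  have hBp0 : 0 ≤ B r s p :=
    B_zero hrs ▸ hB.monotoneOn (left_mem_Icc.mpr zero_le_one) ⟨hp0, hp1.le⟩ hp0
  have hBp1 : B r s p < 1 :=
    B_one hs ▸ hB ⟨hp0, hp1.le⟩ (right_mem_Icc.mpr zero_le_one) hp1
  set g : ℝ → ℝ := fun y => (k : ℝ) * B r s y + 2 * y with hg
  have hgmono : StrictMonoOn g (Icc 0 1) :=
    MonotoneOn.add_strictMono
      (fun x hx y hy hxy => mul_le_mul_of_nonneg_left (hB.monotoneOn hx hy hxy) (Nat.cast_nonneg k))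
      ((strictMono_mul_left_of_pos (two_pos : (0 : ℝ) < 2)).strictMonoOn _)
  have hgcont : Continuous g :=
    (continuous_const.mul (continuous_B r s)).add (continuous_const.mul continuous_id)
  have hf : ∀ y, f r s k y p = 0 ↔ g y = (k + 1) * B r s p + 1 := fun y => by
    simp only [f, hg]
    constructor <;> intro h <;> linarith
  simp_rw [hf]
  refine existsUnique_mem_Ioo_eq_of_strictMonoOn zero_le_one hgcont.continuousOn hgmono ?_
  simp only [hg, B_zero hrs, B_one hs]
  constructor <;> nlinarith [(Nat.cast_nonneg k : (0 : ℝ) ≤ k)]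
end

section
/- For every k ≥ 0, p_k < p_*, where p_* is the smallest root of B_{r,s}(p) − 2p + 1 = 0 in (0,1]. -/
open Polynomial Finset

theorem bernsteinPolynomial.derivative_sum_range {R : Type*} [CommRing R] (n s : ℕ) :
    derivative (∑ ν ∈ range (s + 1), bernsteinPolynomial R (n + 1) ν) =
      -(n + 1) * bernsteinPolynomial R n s := by
  induction s with
  | zero => simp [bernsteinPolynomial.derivative_zero]
  | succ s ih =>
    rw [sum_range_succ, derivative_add, ih, bernsteinPolynomial.derivative_succ_aux]
    ring

theorem bernsteinPolynomial.eval_pos {n ν : ℕ} (h : ν ≤ n) {x : ℝ}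
    (hx : x ∈ Set.Ioo 0 1) :
    0 < (bernsteinPolynomial ℝ n ν).eval x := by
  have := Nat.choose_pos h
  have := sub_pos.2 hx.2
  have := hx.1
  simp only [bernsteinPolynomial, eval_mul, eval_natCast, eval_pow, eval_X, eval_sub, eval_one]
  positivity

theorem B_eq_eval_sum_bernsteinPolynomial (r s : ℕ) (p : ℝ) :
    B r s p = (∑ ν ∈ range s, bernsteinPolynomial ℝ r ν).eval (1 - p) := by
  simp only [B, eval_finsetSum, bernsteinPolynomial, eval_mul, eval_natCast, eval_pow, eval_X,
    eval_sub, eval_one, sub_sub_cancel]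
  exact sum_congr rfl fun _ _ => by ring

theorem hasDerivAt_B_s2 (n m : ℕ) (x : ℝ) :
    HasDerivAt (B (n + 1) (m + 1)) ((n + 1) * (bernsteinPolynomial ℝ n m).eval (1 - x)) x := by
  have h := ((∑ ν ∈ range (m + 1), bernsteinPolynomial ℝ (n + 1) ν).hasDerivAt
    (1 - x)).comp_const_sub 1 x
  rw [bernsteinPolynomial.derivative_sum_range] at h
  rw [show B (n + 1) (m + 1) = _ from _root_.funext (B_eq_eval_sum_bernsteinPolynomial _ _)]
  refine h.congr_deriv ?_
  simp only [eval_mul, eval_neg, eval_add, eval_natCast, eval_one]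
  ring

theorem B_strictMonoOn {r s : ℕ} (hs : 1 ≤ s) (hrs : s ≤ r) :
    StrictMonoOn (B r s) (Set.Icc 0 1) := by
  obtain ⟨n, rfl⟩ : ∃ n, r = n + 1 := ⟨r - 1, by omega⟩
  obtain ⟨m, rfl⟩ : ∃ m, s = m + 1 := ⟨s - 1, by omega⟩
  refine strictMonoOn_of_deriv_pos (convex_Icc 0 1)
    (fun x _ => (hasDerivAt_B_s2 n m x).continuousAt.continuousWithinAt) fun x hx => ?_
  rw [interior_Icc] at hx
  rw [(hasDerivAt_B_s2 n m x).deriv]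
  have : 0 < (bernsteinPolynomial ℝ n m).eval (1 - x) :=
    bernsteinPolynomial.eval_pos (by omega) ⟨by linarith [hx.2], by linarith [hx.1]⟩
  positivity

theorem lt_of_f_eq_zero {r s k : ℕ} (hs : 1 ≤ s) (hrs : s ≤ r) {x y q : ℝ}
    (hx : x ∈ Set.Icc 0 1) (hy : y ∈ Set.Icc 0 1) (hq : q ∈ Set.Icc 0 1)
    (hroot : B r s q - 2 * q + 1 = 0) (hyq : y < q) (hf : f r s k x y = 0) : x < q := by
  by_contra! hqx
  have hBy : B r s y < B r s q := B_strictMonoOn hs hrs hy hq hyq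
  have hBx : B r s q ≤ B r s x := (B_strictMonoOn hs hrs).monotoneOn hq hx hqx
  have hkBx : (k : ℝ) * B r s q ≤ k * B r s x := mul_le_mul_of_nonneg_left hBx k.cast_nonneg
  have hkBy : ((k : ℝ) + 1) * B r s y < (k + 1) * B r s q := by gcongr
  unfold f at hf
  linarith

/-- For every `k ≥ 0`, `p_k < p_*`, where `p_*` is the smallest root of
`B_{r,s}(p) - 2p + 1 = 0` in `(0,1]`. -/
theorem stmt_2 (r s : ℕ) (hs : 1 ≤ s) (hrs : s ≤ r) (p : ℕ → ℝ)
    (hp0 : p 0 = 0)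
    (hp : ∀ k, 1 ≤ k → p k ∈ Set.Ioo (0 : ℝ) 1 ∧ f r s k (p k) (p (k - 1)) = 0)
    (pstar : ℝ)
    (hpstar : IsLeast {q : ℝ | q ∈ Set.Ioc (0 : ℝ) 1 ∧ B r s q - 2 * q + 1 = 0} pstar) :
    ∀ k : ℕ, p k < pstar := by
  obtain ⟨⟨hstar_pos, hstar_le⟩, hroot⟩ := hpstar.1
  have hmem : ∀ k, p k ∈ Set.Icc (0 : ℝ) 1 := by
    rintro (_ | k)
    · simp [hp0]
    · exact Set.Ioo_subset_Icc_self (hp (k + 1) k.succ_pos).1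
  intro k
  induction k with
  | zero => rwa [hp0]
  | succ k ih =>
    exact lt_of_f_eq_zero hs hrs (hmem (k + 1)) (hmem k) ⟨hstar_pos.le, hstar_le⟩ hroot ih
      (hp (k + 1) k.succ_pos).2
end

section
/- For every integer s ≥ 1 and every p ∈ [1/2,1], B_{2s-1,s}(p) ≥ p; moreover B_{2s-1,s}(p)/(1 − B_{2s-1,s}(p)) ≥ p/(1−p) for p ∈ [1/2,1). -/
/-- Auxiliary: `F n m p = ∑_{j=0}^{m} C(n,j) p^{n-j} (1-p)^j`. -/
noncomputable def F (n m : ℕ) (p : ℝ) : ℝ :=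
  ∑ j ∈ Finset.range (m + 1), (n.choose j : ℝ) * p ^ (n - j) * (1 - p) ^ j

lemma F_step (n m : ℕ) (h : m ≤ n) (p : ℝ) :
    F (n + 1) m p = F n m p - (n.choose m : ℝ) * p ^ (n - m) * (1 - p) ^ (m + 1) := by
  unfold F
  rw [Finset.sum_range_succ']
  have e1 : ∀ j ∈ Finset.range m,
      ((n + 1).choose (j + 1) : ℝ) * p ^ (n + 1 - (j + 1)) * (1 - p) ^ (j + 1)
      = (n.choose j : ℝ) * p ^ (n - j) * (1 - p) ^ j * (1 - p)
        + p * ((n.choose (j + 1) : ℝ) * p ^ (n - (j + 1)) * (1 - p) ^ (j + 1)) := by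
    intro j hj
    rw [Finset.mem_range] at hj
    have h1 : n + 1 - (j + 1) = n - j := by omega
    have h2 : n - j = (n - (j + 1)) + 1 := by omega
    rw [h1, Nat.choose_succ_succ, h2]
    push_cast
    ring
  rw [Finset.sum_congr rfl e1, Finset.sum_add_distrib, ← Finset.sum_mul, ← Finset.mul_sum]
  have e2 : ∑ j ∈ Finset.range m, (n.choose j : ℝ) * p ^ (n - j) * (1 - p) ^ j
      = (∑ j ∈ Finset.range (m + 1), (n.choose j : ℝ) * p ^ (n - j) * (1 - p) ^ j)
        - (n.choose m : ℝ) * p ^ (n - m) * (1 - p) ^ m := by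
    rw [Finset.sum_range_succ]; ring
  have e3 : ∑ j ∈ Finset.range m, (n.choose (j + 1) : ℝ) * p ^ (n - (j + 1)) * (1 - p) ^ (j + 1)
      = (∑ j ∈ Finset.range (m + 1), (n.choose j : ℝ) * p ^ (n - j) * (1 - p) ^ j)
        - (n.choose 0 : ℝ) * p ^ (n - 0) * (1 - p) ^ 0 := by
    rw [Finset.sum_range_succ']; ring
  rw [e2, e3]
  simp only [Nat.choose_zero_right, Nat.cast_one, Nat.sub_zero, pow_zero, Nat.choose_zero_right]
  ring

lemma key (t : ℕ) (p : ℝ) :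
    F (2 * t + 3) (t + 1) p = F (2 * t + 1) t p
      + ((2 * t + 1).choose (t + 1) : ℝ) * p ^ (t + 1) * (1 - p) ^ (t + 1) * (2 * p - 1) := by
  have e1 := F_step (2 * t + 2) (t + 1) (by omega) p
  have e2 := F_step (2 * t + 1) (t + 1) (by omega) p
  have h1 : 2 * t + 2 + 1 = 2 * t + 3 := by omega
  have h2 : 2 * t + 2 - (t + 1) = t + 1 := by omega
  have h3 : 2 * t + 1 + 1 = 2 * t + 2 := by omega
  have h4 : 2 * t + 1 - (t + 1) = t := by omega
  rw [h1, h2] at e1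
  rw [h3, h4] at e2
  have e3 : F (2 * t + 1) (t + 1) p = F (2 * t + 1) t p
      + ((2 * t + 1).choose (t + 1) : ℝ) * p ^ t * (1 - p) ^ (t + 1) := by
    unfold F
    rw [Finset.sum_range_succ, h4]
  have hc : ((2 * t + 2).choose (t + 1) : ℝ) = 2 * ((2 * t + 1).choose (t + 1) : ℝ) := by
    have hp : (2 * t + 1 + 1).choose (t + 1) = (2 * t + 1).choose t + (2 * t + 1).choose (t + 1) :=
      Nat.choose_succ_succ (2 * t + 1) t
    have hsymm : (2 * t + 1).choose t = (2 * t + 1).choose (t + 1) := by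
      have := Nat.choose_symm (show t ≤ 2 * t + 1 by omega)
      have h5 : 2 * t + 1 - t = t + 1 := by omega
      rw [h5] at this
      omega
    rw [h3] at hp
    rw [hp, hsymm]
    push_cast
    ring
  rw [e1, e2, e3, hc]
  ring

lemma mono (t : ℕ) (p : ℝ) (hp : 1 / 2 ≤ p) (hp1 : p ≤ 1) :
    p ≤ F (2 * t + 1) t p := by
  induction t with
  | zero => simp [F]
  | succ t ih =>
    have h1 : 2 * (t + 1) + 1 = 2 * t + 3 := by omega
    rw [h1, key]
    have hnn : 0 ≤ ((2 * t + 1).choose (t + 1) : ℝ) * p ^ (t + 1) * (1 - p) ^ (t + 1) * (2 * p - 1) := by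
      apply mul_nonneg
      apply mul_nonneg
      apply mul_nonneg
      · positivity
      · exact pow_nonneg (by linarith) _
      · exact pow_nonneg (by linarith) _
      · linarith
    linarith

lemma F_lt_one (t : ℕ) (p : ℝ) (hp : 0 ≤ p) (hp1 : p < 1) :
    F (2 * t + 1) t p < 1 := by
  set n := 2 * t + 1 with hn
  have hsum : ∑ i ∈ Finset.range (n + 1), (n.choose i : ℝ) * p ^ (n - i) * (1 - p) ^ i = 1 := by
    have := add_pow (1 - p) p n
    have h0 : ((1 - p) + p) ^ n = 1 := by norm_num
    rw [h0] at this
    calc ∑ i ∈ Finset.range (n + 1), (n.choose i : ℝ) * p ^ (n - i) * (1 - p) ^ i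
        = ∑ i ∈ Finset.range (n + 1), (1 - p) ^ i * p ^ (n - i) * (n.choose i : ℝ) :=
          Finset.sum_congr rfl (fun i _ => by ring)
      _ = 1 := this.symm
  have hsplit : ∑ i ∈ Finset.range (n + 1), (n.choose i : ℝ) * p ^ (n - i) * (1 - p) ^ i
      = F n t p + ∑ i ∈ Finset.Ico (t + 1) (n + 1), (n.choose i : ℝ) * p ^ (n - i) * (1 - p) ^ i := by
    rw [Finset.range_eq_Ico, ← Finset.sum_Ico_consecutive _ (by omega : 0 ≤ t + 1) (by omega : t + 1 ≤ n + 1)]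
    unfold F
    rw [Finset.range_eq_Ico]
  have htail : (1 - p) ^ n ≤ ∑ i ∈ Finset.Ico (t + 1) (n + 1), (n.choose i : ℝ) * p ^ (n - i) * (1 - p) ^ i := by
    have hmem : n ∈ Finset.Ico (t + 1) (n + 1) := by
      simp [Finset.mem_Ico]; omega
    have := Finset.single_le_sum (f := fun i => (n.choose i : ℝ) * p ^ (n - i) * (1 - p) ^ i)
      (fun i _ => mul_nonneg (mul_nonneg (Nat.cast_nonneg _) (pow_nonneg hp _)) (pow_nonneg (by linarith) _)) hmem
    simpa using this
  have hq : 0 < (1 - p) ^ n := pow_pos (by linarith) _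
  linarith [hsum, hsplit, htail]

/-- For every `s ≥ 1` and every `p ∈ [1/2,1]`, `B_{2s-1,s}(p) ≥ p`; moreover
`B_{2s-1,s}(p)/(1 - B_{2s-1,s}(p)) ≥ p/(1-p)` for `p ∈ [1/2,1)`. -/
theorem stmt_5 (s : ℕ) (hs : 1 ≤ s) (p : ℝ) :
    (p ∈ Set.Icc (1 / 2 : ℝ) 1 → p ≤ B (2 * s - 1) s p) ∧
    (p ∈ Set.Ico (1 / 2 : ℝ) 1 →
      p / (1 - p) ≤ B (2 * s - 1) s p / (1 - B (2 * s - 1) s p)) := by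
  obtain ⟨t, rfl⟩ : ∃ t, s = t + 1 := ⟨s - 1, by omega⟩
  have hB : B (2 * (t + 1) - 1) (t + 1) p = F (2 * t + 1) t p := by
    have h1 : 2 * (t + 1) - 1 = 2 * t + 1 := by omega
    rw [h1]; rfl
  rw [hB]
  constructor
  · rintro ⟨h1, h2⟩
    exact mono t p h1 h2
  · rintro ⟨h1, h2⟩
    have hle : p ≤ F (2 * t + 1) t p := mono t p h1 (le_of_lt h2)
    have hlt : F (2 * t + 1) t p < 1 := F_lt_one t p (by linarith) h2
    have hp1 : (0 : ℝ) < 1 - p := by linarith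
    have hb1 : (0 : ℝ) < 1 - F (2 * t + 1) t p := by linarith
    rw [div_le_div_iff₀ hp1 hb1]
    nlinarith [hle]
end

section
/- For every integer s ≥ 1 and every integer r with s ≤ r ≤ 2s−1, the function B_{r,s}(p) − 2p + 1 is strictly positive for all p ∈ [0,1). (Equivalently, the threshold r(s), defined as the least r for which B_{r,s}(p) − 2p + 1 has a root in (0,1), satisfies r(s) ≥ 2s.) -/
open Finset

theorem pow_mul_pow_le_pow_mul_pow {p q : ℝ} (hq : 0 ≤ q) (hqp : q ≤ p) {a b : ℕ}
    (hab : a ≤ b) : p ^ a * q ^ b ≤ p ^ b * q ^ a := by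
  obtain ⟨d, rfl⟩ := Nat.exists_eq_add_of_le hab
  have hp : 0 ≤ p := hq.trans hqp
  calc p ^ a * q ^ (a + d) = p ^ a * q ^ a * q ^ d := by ring
    _ ≤ p ^ a * q ^ a * p ^ d := by gcongr
    _ = p ^ (a + d) * q ^ a := by ring

theorem B_nonneg (r s : ℕ) {p : ℝ} (hp : 0 ≤ p) (hp1 : p ≤ 1) : 0 ≤ B r s p := by
  have : 0 ≤ 1 - p := by linarith
  exact sum_nonneg fun i _ ↦ by positivity

theorem B_add_B_one_sub {r s : ℕ} (hs : s ≤ r + 1) (p : ℝ) :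
    B r s p + B r (r + 1 - s) (1 - p) = 1 := by
  set f : ℕ → ℝ := fun i ↦ (r.choose i : ℝ) * p ^ (r - i) * (1 - p) ^ i
  have hupper : B r (r + 1 - s) (1 - p) = ∑ i ∈ Ico s (r + 1), f i := by
    rw [B, ← Nat.Ico_zero_eq_range, ← Nat.sub_self (r + 1), ← sum_Ico_reflect _ _ le_rfl]
    refine sum_congr rfl fun i hi ↦ ?_
    have hir : i ≤ r := Nat.lt_succ_iff.mp (mem_Ico.mp hi).2
    rw [Nat.choose_symm hir, Nat.sub_sub_self hir, sub_sub_cancel, mul_right_comm]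
  calc B r s p + B r (r + 1 - s) (1 - p) = ∑ i ∈ range (r + 1), f i := by
        rw [hupper, B, sum_range_add_sum_Ico _ hs]
    _ = (1 - p + p) ^ r := by
        rw [add_pow]; exact sum_congr rfl fun i _ ↦ by ring
    _ = 1 := by simp

theorem mul_B_one_sub_le_mul_B {r s : ℕ} (hrs : r + 1 ≤ 2 * s) {p : ℝ} (hp : 1 / 2 ≤ p)
    (hp1 : p ≤ 1) :
    p * B r (r + 1 - s) (1 - p) ≤ (1 - p) * B r s p := by
  have hq : 0 ≤ 1 - p := by linarith
  have hqp : 1 - p ≤ p := by linarith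
  calc p * B r (r + 1 - s) (1 - p)
      ≤ (1 - p) * ∑ i ∈ range (r + 1 - s), (r.choose i : ℝ) * p ^ (r - i) * (1 - p) ^ i := by
        rw [B, mul_sum, mul_sum]
        refine sum_le_sum fun i hi ↦ ?_
        have hi : i + 1 ≤ r - i := by have := mem_range.mp hi; omega
        have hpow := pow_mul_pow_le_pow_mul_pow hq hqp hi
        rw [sub_sub_cancel]
        calc p * ((r.choose i : ℝ) * (1 - p) ^ (r - i) * p ^ i)
            = (r.choose i : ℝ) * (p ^ (i + 1) * (1 - p) ^ (r - i)) := by ring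
          _ ≤ (r.choose i : ℝ) * (p ^ (r - i) * (1 - p) ^ (i + 1)) := by gcongr
          _ = (1 - p) * ((r.choose i : ℝ) * p ^ (r - i) * (1 - p) ^ i) := by ring
    _ ≤ (1 - p) * B r s p := by
        gcongr
        exact sum_le_sum_of_subset_of_nonneg (range_subset_range.mpr (by omega))
          fun i _ _ ↦ by positivity

theorem le_B_of_half_le {r s : ℕ} (hs : s ≤ r + 1) (hrs : r + 1 ≤ 2 * s) {p : ℝ} (hp : 1 / 2 ≤ p)
    (hp1 : p ≤ 1) : p ≤ B r s p := by
  linear_combination mul_B_one_sub_le_mul_B hrs hp hp1 - p * B_add_B_one_sub hs p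

/-- For every `s ≥ 1` and every integer `r` with `s ≤ r ≤ 2s - 1`, the function
`B_{r,s}(p) - 2p + 1` is strictly positive for all `p ∈ [0,1)`; equivalently the
threshold `r(s)` satisfies `r(s) ≥ 2s`. -/
theorem stmt_6 (s r : ℕ) (hs : 1 ≤ s) (hsr : s ≤ r) (hr : r ≤ 2 * s - 1) :
    ∀ p ∈ Set.Ico (0 : ℝ) 1, 0 < B r s p - 2 * p + 1 := by
  rintro p ⟨hp0, hp1⟩
  rcases lt_or_ge p (1 / 2) with hp | hp
  · linarith [B_nonneg r s hp0 hp1.le]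
  · linarith [le_B_of_half_le (hsr.trans r.le_succ) (by omega) hp hp1.le]
end

section
/- For every ε > 0 and every p with 1/2 < p < (1+ε)/(2+ε), there exists s₀ such that for all integers s ≥ s₀ and all integers r with (2+ε)s ≤ r ≤ (2+2ε)s, one has B_{r,s}(p) − 2p + 1 < 0. (Such an integer r exists whenever s > 1/ε; consequently the least r for which B_{r,s}(p) − 2p + 1 has a root in (0,1) is at most (2+2ε)s for all sufficiently large s.) -/
lemma B_le_pow_mul_pow {r s : ℕ} {p t : ℝ} (hsr : s ≤ r + 1) (hp0 : 0 ≤ p) (hp1 : p ≤ 1)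
    (ht : 1 ≤ t) :
    B r s p ≤ t ^ (s - 1) * (p + (1 - p) / t) ^ r := by
  have ht0 : 0 < t := one_pos.trans_le ht
  have hterm : ∀ i ∈ Finset.range s, (r.choose i : ℝ) * p ^ (r - i) * (1 - p) ^ i ≤
      t ^ (s - 1) * (((1 - p) / t) ^ i * p ^ (r - i) * r.choose i) := by
    intro i hi
    have hi : i ≤ s - 1 := Nat.le_sub_one_of_lt (Finset.mem_range.mp hi)
    have hpow : (1 - p) ^ i ≤ t ^ (s - 1) * ((1 - p) / t) ^ i :=
      calc (1 - p) ^ i = t ^ i * ((1 - p) / t) ^ i := by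
            rw [← mul_pow, mul_div_cancel₀ _ ht0.ne']
        _ ≤ t ^ (s - 1) * ((1 - p) / t) ^ i := by gcongr
    calc (r.choose i : ℝ) * p ^ (r - i) * (1 - p) ^ i
        ≤ r.choose i * p ^ (r - i) * (t ^ (s - 1) * ((1 - p) / t) ^ i) := by gcongr
      _ = t ^ (s - 1) * (((1 - p) / t) ^ i * p ^ (r - i) * r.choose i) := by ring
  calc B r s p
      ≤ t ^ (s - 1) * ∑ i ∈ Finset.range s, ((1 - p) / t) ^ i * p ^ (r - i) * r.choose i := by
        rw [Finset.mul_sum]; exact Finset.sum_le_sum hterm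
    _ ≤ t ^ (s - 1) * ((1 - p) / t + p) ^ r := by
        rw [add_pow]
        gcongr
    _ = t ^ (s - 1) * (p + (1 - p) / t) ^ r := by rw [add_comm]

lemma B_le_mul_rpow_pow {r s : ℕ} {p t a : ℝ} (hp0 : 0 ≤ p) (hp1 : p ≤ 1) (ht : 1 ≤ t)
    (ha : 1 ≤ a) (hr : a * s ≤ r) :
    B r s p ≤ (t * (p + (1 - p) / t) ^ a) ^ s := by
  have hu0 : 0 ≤ p + (1 - p) / t := by
    have : 0 ≤ 1 - p := sub_nonneg.mpr hp1
    positivity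
  have hu1 : p + (1 - p) / t ≤ 1 := by
    have : (1 - p) / t ≤ 1 - p := div_le_self (sub_nonneg.mpr hp1) ht
    linarith
  have hsr : s ≤ r := by
    have : (s : ℝ) ≤ r := le_trans (le_mul_of_one_le_left (Nat.cast_nonneg s) ha) hr
    exact_mod_cast this
  calc B r s p ≤ t ^ (s - 1) * (p + (1 - p) / t) ^ r := B_le_pow_mul_pow (by omega) hp0 hp1 ht
    _ ≤ t ^ s * (p + (1 - p) / t) ^ (a * s) := by
        gcongr
        · exact Nat.sub_le s 1
        · rw [← Real.rpow_natCast]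
          exact Real.rpow_le_rpow_of_exponent_ge' hu0 hu1 (by positivity) hr
    _ = (t * (p + (1 - p) / t) ^ a) ^ s := by
        rw [Real.rpow_mul hu0, Real.rpow_natCast, mul_pow]

lemma exists_one_le_mul_rpow_lt_one {p a : ℝ} (hp : 0 ≤ p) (ha : 0 < a)
    (hpa : 1 < a * (1 - p)) :
    ∃ t, 1 ≤ t ∧ t * (p + (1 - p) / t) ^ a < 1 := by
  set δ := a * (1 - p) - 1
  have hδ : 0 < δ := by simp only [δ]; linarith
  have hq : 0 < 1 - p := pos_of_mul_pos_right (one_pos.trans hpa) ha.le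
  set t := 1 + δ / 2
  have ht0 : 0 < t := by positivity
  set x := (1 - p) * (δ / 2) / t
  have hu : p + (1 - p) / t = 1 - x := by
    simp only [x, t]; field_simp; ring
  have hax : a * x = (1 + δ) * (δ / 2) / t := by
    simp only [x, δ]; field_simp; ring
  -- `t ≤ exp (δ/2)` and `1 - x ≤ exp (-x)`, while `a x = (1 + δ)/(1 + δ/2) · δ/2 > δ/2`.
  have hexp : δ / 2 - a * x < 0 := by
    rw [hax, sub_neg, lt_div_iff₀ ht0]
    simp only [t]; nlinarith
  refine ⟨t, by simp only [t]; linarith, ?_⟩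
  have hu0 : 0 ≤ p + (1 - p) / t := by positivity
  have ht_le : t ≤ Real.exp (δ / 2) := by simp only [t]; linarith [Real.add_one_le_exp (δ / 2)]
  have hu_le : p + (1 - p) / t ≤ Real.exp (-x) := by linarith [Real.add_one_le_exp (-x)]
  calc t * (p + (1 - p) / t) ^ a
      ≤ Real.exp (δ / 2) * Real.exp (-x) ^ a := by gcongr
    _ = Real.exp (δ / 2 - a * x) := by
        rw [← Real.exp_mul, ← Real.exp_add]; ring_nf
    _ < 1 := Real.exp_lt_one_iff.mpr hexp

/-- For every `ε > 0` and every `p` with `1/2 < p < (1+ε)/(2+ε)`, there exists `s₀`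
such that for all integers `s ≥ s₀` and all integers `r` with
`(2+ε)s ≤ r ≤ (2+2ε)s`, one has `B_{r,s}(p) - 2p + 1 < 0`. -/
theorem stmt_7 (ε : ℝ) (hε : 0 < ε) (p : ℝ) (hp1 : 1 / 2 < p)
    (hp2 : p < (1 + ε) / (2 + ε)) :
    ∃ s₀ : ℕ, ∀ s : ℕ, s₀ ≤ s → ∀ r : ℕ,
      (2 + ε) * s ≤ (r : ℝ) → (r : ℝ) ≤ (2 + 2 * ε) * s →
      B r s p - 2 * p + 1 < 0 := by
  have hpa : 1 < (2 + ε) * (1 - p) := by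
    rw [lt_div_iff₀ (by positivity)] at hp2
    linarith
  have hp_le_one : p ≤ 1 := by nlinarith
  obtain ⟨t, ht, hc⟩ := exists_one_le_mul_rpow_lt_one (by linarith) (by positivity) hpa
  have hc0 : 0 ≤ t * (p + (1 - p) / t) ^ (2 + ε) := by
    have : 0 ≤ (1 - p) / t := div_nonneg (by linarith) (by linarith)
    have : 0 ≤ p + (1 - p) / t := by linarith
    positivity
  obtain ⟨s₀, hs₀⟩ := Filter.eventually_atTop.mp <|
    (tendsto_pow_atTop_nhds_zero_of_lt_one hc0 hc).eventually_lt_const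
      (show (0 : ℝ) < 2 * p - 1 by linarith)
  refine ⟨s₀, fun s hs r hr _ => ?_⟩
  linarith [B_le_mul_rpow_pow (by linarith) hp_le_one ht (by linarith) hr, hs₀ s hs]
end

section
/- Suppose r ≥ s ≥ 2. For every k ≥ 1 such that p_{k-1} > (r−s)/(r−1), one has 1 − p_k < ((k+1)/2)·binom(r,s)·(1 − p_{k-1})^s. -/
/-!
Rearranging `f k (p k, p (k-1)) = 0` gives
`2 (1 - p k) = (k+1) (1 - B(p (k-1))) - k (1 - B(p k))`.
The subtracted term is positive since `p k < 1`, and the upper tail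
`1 - B(q) = P(Binomial(r, 1-q) ≥ s)` is at most `C(r,s) (1-q)^s`
(a union bound over the `s`-subsets, i.e. `C(r, s+j) ≤ C(r,s) C(r-s,j)`).
-/

open Finset

noncomputable def binomTerm (n : ℕ) (p : ℝ) (i : ℕ) : ℝ :=
  (n.choose i : ℝ) * p ^ (n - i) * (1 - p) ^ i

lemma B_eq_sum_binomTerm (r s : ℕ) (p : ℝ) : B r s p = ∑ i ∈ range s, binomTerm r p i := rfl

lemma binomTerm_nonneg (n : ℕ) {p : ℝ} (hp0 : 0 ≤ p) (hp1 : p ≤ 1) (i : ℕ) :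
    0 ≤ binomTerm n p i := by
  have : 0 ≤ 1 - p := by linarith
  unfold binomTerm
  positivity

lemma sum_binomTerm_eq_one (n : ℕ) (p : ℝ) : ∑ i ∈ range (n + 1), binomTerm n p i = 1 := by
  have h := add_pow (1 - p) p n
  rw [sub_add_cancel, one_pow] at h
  rw [h]
  exact sum_congr rfl fun i _ => by unfold binomTerm; ring

lemma one_sub_B_eq_sum_Ico {r s : ℕ} (hrs : s ≤ r) (p : ℝ) :
    1 - B r s p = ∑ i ∈ Ico s (r + 1), binomTerm r p i := by
  rw [← sum_binomTerm_eq_one r p, B_eq_sum_binomTerm, range_eq_Ico, range_eq_Ico,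
    ← sum_Ico_consecutive _ (Nat.zero_le s) (Nat.le_succ_of_le hrs)]
  ring

lemma one_sub_B_pos {r s : ℕ} (hrs : s ≤ r) {p : ℝ} (hp0 : 0 ≤ p) (hp1 : p < 1) :
    0 < 1 - B r s p := by
  rw [one_sub_B_eq_sum_Ico hrs]
  have hr : r ∈ Ico s (r + 1) := mem_Ico.mpr ⟨hrs, Nat.lt_succ_self r⟩
  have hlast : 0 < binomTerm r p r := by
    have : 0 < 1 - p := by linarith
    simp only [binomTerm, Nat.choose_self, Nat.sub_self, Nat.cast_one, pow_zero, one_mul]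
    positivity
  exact hlast.trans_le (single_le_sum (fun i _ => binomTerm_nonneg r hp0 hp1.le i) hr)

lemma Nat.choose_add_le_choose_mul_choose (n s j : ℕ) :
    n.choose (s + j) ≤ n.choose s * (n - s).choose j := by
  have h := Nat.choose_mul (n := n) (Nat.le_add_right s j)
  rw [Nat.add_sub_cancel_left] at h
  exact h ▸ Nat.le_mul_of_pos_right _ (Nat.choose_pos (Nat.le_add_right s j))

lemma binomTerm_add_le (r s j : ℕ) {p : ℝ} (hp0 : 0 ≤ p) (hp1 : p ≤ 1) :
    binomTerm r p (s + j) ≤ (r.choose s : ℝ) * (1 - p) ^ s * binomTerm (r - s) p j := by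
  have hchoose : (r.choose (s + j) : ℝ) ≤ (r.choose s : ℝ) * ((r - s).choose j : ℝ) := by
    exact_mod_cast Nat.choose_add_le_choose_mul_choose r s j
  have : 0 ≤ 1 - p := by linarith
  calc binomTerm r p (s + j)
      = (r.choose (s + j) : ℝ) * (p ^ (r - s - j) * (1 - p) ^ s * (1 - p) ^ j) := by
        rw [binomTerm, Nat.sub_add_eq, pow_add]; ring
    _ ≤ (r.choose s : ℝ) * ((r - s).choose j : ℝ) *
          (p ^ (r - s - j) * (1 - p) ^ s * (1 - p) ^ j) := by gcongr
    _ = (r.choose s : ℝ) * (1 - p) ^ s * binomTerm (r - s) p j := by rw [binomTerm]; ring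

lemma one_sub_B_le {r s : ℕ} (hrs : s ≤ r) {p : ℝ} (hp0 : 0 ≤ p) (hp1 : p ≤ 1) :
    1 - B r s p ≤ (r.choose s : ℝ) * (1 - p) ^ s := by
  have hlen : r + 1 - s = r - s + 1 := by omega
  calc 1 - B r s p = ∑ j ∈ range (r - s + 1), binomTerm r p (s + j) := by
        rw [one_sub_B_eq_sum_Ico hrs, sum_Ico_eq_sum_range, hlen]
    _ ≤ ∑ j ∈ range (r - s + 1), (r.choose s : ℝ) * (1 - p) ^ s * binomTerm (r - s) p j :=
        sum_le_sum fun j _ => binomTerm_add_le r s j hp0 hp1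
    _ = (r.choose s : ℝ) * (1 - p) ^ s := by rw [← mul_sum, sum_binomTerm_eq_one, mul_one]

lemma two_mul_one_sub_of_f_eq_zero {r s k : ℕ} {x q : ℝ} (hf : f r s k x q = 0) :
    2 * (1 - x) = ((k : ℝ) + 1) * (1 - B r s q) - k * (1 - B r s x) := by
  unfold f at hf
  linarith

theorem stmt_9_general (r s : ℕ) (hrs : s ≤ r) (p : ℕ → ℝ)
    (hp0 : p 0 = 0)
    (hp : ∀ k, 1 ≤ k → p k ∈ Set.Ioo (0 : ℝ) 1 ∧ f r s k (p k) (p (k - 1)) = 0) :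
    ∀ k, 1 ≤ k → ((r : ℝ) - s) / ((r : ℝ) - 1) < p (k - 1) →
      1 - p k < ((k : ℝ) + 1) / 2 * (r.choose s : ℝ) * (1 - p (k - 1)) ^ s := by
  intro k hk _
  obtain ⟨⟨hpk0, hpk1⟩, hf⟩ := hp k hk
  have hprev : p (k - 1) ∈ Set.Icc (0 : ℝ) 1 := by
    rcases Nat.eq_zero_or_pos (k - 1) with h | h
    · rw [h, hp0]; exact ⟨le_rfl, zero_le_one⟩
    · exact Set.Ioo_subset_Icc_self (hp (k - 1) h).1
  have htail := one_sub_B_le hrs hprev.1 hprev.2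
  have hdrop : 0 < (k : ℝ) * (1 - B r s (p k)) :=
    mul_pos (by exact_mod_cast hk) (one_sub_B_pos hrs hpk0.le hpk1)
  have hkey := two_mul_one_sub_of_f_eq_zero hf
  linarith [mul_le_mul_of_nonneg_left htail (by positivity : (0 : ℝ) ≤ (k : ℝ) + 1)]

/-- For `r ≥ s ≥ 2`: for every `k ≥ 1` with `p_{k-1} > (r-s)/(r-1)`, one has
`1 - p_k < ((k+1)/2) · C(r,s) · (1 - p_{k-1})^s`. -/
theorem stmt_9 (r s : ℕ) (hs : 2 ≤ s) (hrs : s ≤ r) (p : ℕ → ℝ)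
    (hp0 : p 0 = 0)
    (hp : ∀ k, 1 ≤ k → p k ∈ Set.Ioo (0 : ℝ) 1 ∧ f r s k (p k) (p (k - 1)) = 0) :
    ∀ k, 1 ≤ k → ((r : ℝ) - s) / ((r : ℝ) - 1) < p (k - 1) →
      1 - p k < ((k : ℝ) + 1) / 2 * (r.choose s : ℝ) * (1 - p (k - 1)) ^ s :=
  stmt_9_general r s hrs p hp0 hp
end

section
/- Fix an integer s ≥ 2, an integer k ≥ 0, and positive reals a and y_k. Define y_i = a·(i+1)·y_{i-1}^s for each integer i > k. If y_k < (a(k+3))^{-1/(s-1)}, then there exist constants C < 1 and b > 0 such that y_{k+j} < b·C^{s^j} for all integers j ≥ 0. -/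
/-!
With `s = m + 1`, the quantity `w_j = a (k + j + 3) y_{k+j}^m` satisfies `w_{j+1} ≤ w_j^s`,
because `(n - 1)^m (n + 1) ≤ n^(m+1)`. Hence `w_j ≤ w_0^(s^j)`, and the hypothesis on `y_k`
says exactly that `w_0 < 1`. Taking `m`-th roots gives `y_{k+j} ≤ b C^(s^j)` with
`b = (a (k + 3))^(-1/m)` and `C = y_k / b < 1`.
-/

open Real

theorem sub_one_pow_mul_add_one_le_pow {n : ℝ} (hn : 1 ≤ n) {m : ℕ} (hm : m ≠ 0) :
    (n - 1) ^ m * (n + 1) ≤ n ^ (m + 1) := by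
  obtain ⟨m, rfl⟩ := Nat.exists_eq_succ_of_ne_zero hm
  calc (n - 1) ^ (m + 1) * (n + 1) = (n - 1) ^ m * (n ^ 2 - 1) := by ring
    _ ≤ n ^ m * n ^ 2 := by gcongr <;> nlinarith
    _ = n ^ (m + 1 + 1) := by ring

theorem potential_succ_le {a n z : ℝ} {m : ℕ} (hm : m ≠ 0) (ha : 0 ≤ a) (hn : 1 ≤ n)
    (hz : 0 ≤ z) :
    a * (n + 1) * (a * (n - 1) * z ^ (m + 1)) ^ m ≤ (a * n * z ^ m) ^ (m + 1) :=
  calc _ = a ^ (m + 1) * (z ^ m) ^ (m + 1) * ((n - 1) ^ m * (n + 1)) := by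
        simp only [mul_pow]; ring
    _ ≤ a ^ (m + 1) * (z ^ m) ^ (m + 1) * n ^ (m + 1) := by
        gcongr; exact sub_one_pow_mul_add_one_le_pow hn hm
    _ = (a * n * z ^ m) ^ (m + 1) := by ring

section Recurrence

variable {a : ℝ} {y : ℕ → ℝ} {k m : ℕ}
  (hrec : ∀ i, k < i → y i = a * ((i : ℝ) + 1) * y (i - 1) ^ (m + 1))
include hrec

theorem rec_add_succ (j : ℕ) :
    y (k + (j + 1)) = a * ((k : ℝ) + j + 2) * y (k + j) ^ (m + 1) := by
  rw [hrec (k + (j + 1)) (by omega), show k + (j + 1) - 1 = k + j by omega]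
  push_cast
  ring

theorem nonneg_of_rec (ha : 0 ≤ a) (hyk : 0 ≤ y k) (j : ℕ) : 0 ≤ y (k + j) := by
  induction j with
  | zero => exact hyk
  | succ j ih => rw [rec_add_succ hrec]; positivity

theorem potential_le_pow (hm : m ≠ 0) (ha : 0 ≤ a) (hyk : 0 ≤ y k) (j : ℕ) :
    a * ((k : ℝ) + j + 3) * y (k + j) ^ m ≤ (a * ((k : ℝ) + 3) * y k ^ m) ^ (m + 1) ^ j := by
  induction j with
  | zero => simp
  | succ j ih =>
    have hy := nonneg_of_rec hrec ha hyk j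
    calc a * ((k : ℝ) + ↑(j + 1) + 3) * y (k + (j + 1)) ^ m
        = a * (((k : ℝ) + j + 3) + 1) *
            (a * (((k : ℝ) + j + 3) - 1) * y (k + j) ^ (m + 1)) ^ m := by
          rw [rec_add_succ hrec]; push_cast; ring
      _ ≤ (a * ((k : ℝ) + j + 3) * y (k + j) ^ m) ^ (m + 1) :=
          potential_succ_le hm ha (by norm_cast; omega) hy
      _ ≤ ((a * ((k : ℝ) + 3) * y k ^ m) ^ (m + 1) ^ j) ^ (m + 1) := by gcongr
      _ = (a * ((k : ℝ) + 3) * y k ^ m) ^ (m + 1) ^ (j + 1) := by rw [← pow_mul, pow_succ]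

end Recurrence

theorem rpow_neg_one_div_natCast_pow {x : ℝ} (hx : 0 ≤ x) {m : ℕ} (hm : m ≠ 0) :
    (x ^ (-(1 / (m : ℝ)))) ^ m = x⁻¹ := by
  rw [rpow_neg hx, inv_pow, one_div, rpow_inv_natCast_pow hx hm]

/-- Fix integers `s ≥ 2`, `k ≥ 0` and positive reals `a`, `y_k`, and define
`y_i = a (i+1) y_{i-1}^s` for `i > k`. If `y_k < (a(k+3))^{-1/(s-1)}`, then there
are constants `C < 1` and `b > 0` with `y_{k+j} < b C^(s^j)` for all `j ≥ 0`. -/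
theorem stmt_10 (s k : ℕ) (hs : 2 ≤ s) (a : ℝ) (ha : 0 < a) (y : ℕ → ℝ)
    (hyk : 0 < y k)
    (hrec : ∀ i, k < i → y i = a * ((i : ℝ) + 1) * y (i - 1) ^ s)
    (hsmall : y k < (a * ((k : ℝ) + 3)) ^ (-(1 / ((s : ℝ) - 1)))) :
    ∃ C b : ℝ, C < 1 ∧ 0 < b ∧ ∀ j : ℕ, y (k + j) < b * C ^ s ^ j := by
  obtain ⟨m, rfl⟩ : ∃ m, s = m + 1 := ⟨s - 1, by omega⟩
  have hm : m ≠ 0 := by omega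
  rw [Nat.cast_succ, add_sub_cancel_right] at hsmall
  set b := (a * ((k : ℝ) + 3)) ^ (-(1 / (m : ℝ)))
  have hb : 0 < b := by positivity
  have hbm : b ^ m = (a * ((k : ℝ) + 3))⁻¹ := rpow_neg_one_div_natCast_pow (by positivity) hm
  have hCm : (y k / b) ^ m = a * ((k : ℝ) + 3) * y k ^ m := by
    rw [div_pow, hbm]; field_simp
  refine ⟨y k / b, 2 * b, (div_lt_one hb).2 hsmall, by positivity, fun j => ?_⟩
  have hy := nonneg_of_rec hrec ha.le hyk.le j
  have hbound : y (k + j) ≤ b * (y k / b) ^ (m + 1) ^ j := by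
    rw [← pow_le_pow_iff_left₀ hy (by positivity) hm, mul_pow, ← pow_mul, mul_comm _ m,
      pow_mul, hCm, hbm, inv_mul_eq_div, le_div_iff₀ (by positivity)]
    calc y (k + j) ^ m * (a * ((k : ℝ) + 3)) ≤ a * ((k : ℝ) + j + 3) * y (k + j) ^ m := by
          rw [mul_comm]; gcongr; simp
      _ ≤ _ := potential_le_pow hrec hm ha.le hyk.le j
  have hpow : 0 < b * (y k / b) ^ (m + 1) ^ j := by positivity
  linarith
end

section
/- For r = 7 and s = 2 (so that B_{7,2}(p) = 7p⁶(1−p) + p⁷), there exists p ∈ (0,1) such that B_{7,2}(p) − 2p + 1 = 7p⁶(1−p) + p⁷ − 2p + 1 < 0. Together with the positivity of B_{6,2}(p) − 2p + 1 on [0,1), this shows that the threshold r(2), the least r for which B_{r,2}(p) − 2p + 1 has a root in (0,1), equals 7. -/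
lemma B72 (p : ℝ) : B 7 2 p = p ^ 7 + 7 * p ^ 6 * (1 - p) := by
  simp [B, Finset.sum_range_succ]

/-- For `r = 7`, `s = 2`, there exists `p ∈ (0,1)` with
`B_{7,2}(p) - 2p + 1 = 7p⁶(1-p) + p⁷ - 2p + 1 < 0`. Together with the positivity of
`B_{6,2}(p) - 2p + 1` on `[0,1)`, this shows that the threshold `r(2)`, the least
`r ≥ 2` for which `B_{r,2}(p) - 2p + 1` has a root in `(0,1)`, equals `7`. -/
theorem stmt_14 :
    (∃ p ∈ Set.Ioo (0 : ℝ) 1, 7 * p ^ 6 * (1 - p) + p ^ 7 - 2 * p + 1 < 0) ∧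
    IsLeast {r : ℕ | 2 ≤ r ∧ ∃ p ∈ Set.Ioo (0 : ℝ) 1, B r 2 p - 2 * p + 1 = 0} 7 := by
  constructor
  · exact ⟨4/5, by norm_num, by norm_num⟩
  constructor
  · refine ⟨by norm_num, ?_⟩
    set f : ℝ → ℝ := fun p => B 7 2 p - 2 * p + 1 with hf
    have hcont : ContinuousOn f (Set.Icc (1/4 : ℝ) (4/5)) := by
      have : f = fun p => p ^ 7 + 7 * p ^ 6 * (1 - p) - 2 * p + 1 := by
        funext p; rw [hf]; simp [B72]
      rw [this]; fun_prop
    have h1 : f (4/5) ≤ 0 := by simp [hf, B72]; norm_num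
    have h2 : (0:ℝ) ≤ f (1/4) := by simp [hf, B72]; norm_num
    have := intermediate_value_Icc' (by norm_num : (1/4:ℝ) ≤ 4/5) hcont
    have h0 : (0:ℝ) ∈ Set.Icc (f (4/5)) (f (1/4)) := ⟨h1, h2⟩
    obtain ⟨c, hc, hfc⟩ := this h0
    exact ⟨c, ⟨lt_of_lt_of_le (by norm_num) hc.1, lt_of_le_of_lt hc.2 (by norm_num)⟩,
      by simpa [hf] using hfc⟩
  · rintro r ⟨hr2, p, ⟨hp0, hp1⟩, hroot⟩
    by_contra h
    push_neg at h
    have key : ∀ r', r' ∈ Finset.Icc 2 6 → B r' 2 p - 2 * p + 1 > 0 := by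
      intro r' hr'
      have h1p : (0:ℝ) < 1 - p := by linarith
      fin_cases hr' <;>
        simp only [B, Finset.sum_range_succ, Finset.sum_range_zero] <;> norm_num
      · nlinarith
      · nlinarith [sq_nonneg (p-1), mul_pos h1p h1p]
      · nlinarith [sq_nonneg (p-1), mul_pos h1p h1p, mul_pos (mul_pos h1p h1p) hp0, sq_nonneg (p - 1/2)]
      · nlinarith [sq_nonneg (p-1), mul_pos h1p h1p, sq_nonneg (p - 2/3),
          mul_nonneg (sq_nonneg (p - 2/3)) hp0.le,
          mul_nonneg (mul_nonneg (sq_nonneg (p - 2/3)) hp0.le) hp0.le]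
      · have hu : 5*p^5 - p^4 - p^3 - p^2 - p + 1 > 0 := by
          nlinarith [sq_nonneg (p - 2/3), mul_nonneg (sq_nonneg (p - 2/3)) hp0.le,
            mul_nonneg (mul_nonneg (sq_nonneg (p - 2/3)) hp0.le) hp0.le,
            mul_nonneg (mul_nonneg (mul_nonneg (sq_nonneg (p - 2/3)) hp0.le) hp0.le) hp0.le,
            sq_nonneg (p^2 - p), mul_pos hp0 hp0, sq_nonneg (p^2 - 2/3*p)]
        nlinarith [mul_pos h1p hu]
    have : r ∈ Finset.Icc 2 6 := by
      simp only [Finset.mem_Icc]; omega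
    have := key r this
    linarith
end

section
/- For the greedy-choice sequence with r = 2 and s = 1, (1 − p_k)·log(k+1) → 2 as k → ∞. -/
/-!
Put `y n = (1 - p n)⁻¹`. The recurrence rearranges to
`(p (n+1) - p n) * (1 + (n+2) p n + (n+1) p (n+1)) = (1 - p n) (1 - p (n+1))`, i.e.
`y (n+1) - y n = 1 / (1 + (n+2) p n + (n+1) p (n+1))`. Since `0 ≤ p < 1` these increments
are at least `1 / (4(n+1))`, so `y → ∞` and `p → 1`; then `(n+1) (y (n+1) - y n) → 1/2`,
and Stolz–Cesàro against `log (n+1)`, whose increments are `~ 1/(n+1)`, gives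
`y n / log (n+1) → 1/2`.
-/

open Filter Topology Real Finset Asymptotics

theorem tendsto_atTop_of_const_mul_sub_le_sub {a b : ℕ → ℝ} {c : ℝ} (hc : 0 < c)
    (hb : Tendsto b atTop atTop) (h : ∀ n, c * (b (n + 1) - b n) ≤ a (n + 1) - a n) :
    Tendsto a atTop atTop := by
  have hlow : ∀ n, a 0 + c * (b n - b 0) ≤ a n := by
    intro n
    induction n with
    | zero => simp
    | succ n ih => linarith [h n]
  refine tendsto_atTop_mono hlow (tendsto_atTop_add_const_left _ _ ?_)
  exact (tendsto_atTop_add_const_right _ _ hb).const_mul_atTop hc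

theorem tendsto_div_of_tendsto_sub_div_sub {a b : ℕ → ℝ} {L : ℝ} (hb_mono : StrictMono b)
    (hb : Tendsto b atTop atTop)
    (h : Tendsto (fun n => (a (n + 1) - a n) / (b (n + 1) - b n)) atTop (𝓝 L)) :
    Tendsto (fun n => a n / b n) atTop (𝓝 L) := by
  have hg : ∀ n, 0 < b (n + 1) - b n := fun n => sub_pos.2 (hb_mono n.lt_succ_self)
  have hstep : (fun n => a (n + 1) - a n - L * (b (n + 1) - b n)) =o[atTop]
      fun n => b (n + 1) - b n := by
    refine (isLittleO_iff_tendsto' (Eventually.of_forall fun n hn => absurd hn (hg n).ne')).2 ?_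
    refine (tendsto_sub_nhds_zero_iff.2 h).congr fun n => ?_
    rw [sub_div _ (L * _), mul_div_cancel_right₀ _ (hg n).ne']
  have hsum : (fun n => a n - a 0 - L * (b n - b 0)) =o[atTop] fun n => b n - b 0 := by
    have hb_sub : Tendsto (fun n => b n - b 0) atTop atTop := tendsto_atTop_add_const_right _ _ hb
    refine (hstep.sum_range (fun n => (hg n).le) ?_).congr (fun n => ?_) (fun n => ?_)
    · simpa only [sum_range_sub] using hb_sub
    · rw [sum_sub_distrib, ← mul_sum, sum_range_sub, sum_range_sub]
    · rw [sum_range_sub]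
  have hconst : ∀ c : ℝ, (fun _ : ℕ => c) =o[atTop] b := fun c =>
    isLittleO_const_left.2 <| Or.inr <| tendsto_norm_atTop_atTop.comp hb
  have hmain : (fun n => a n - L * b n) =o[atTop] b :=
    ((hsum.trans_isBigO ((isBigO_refl b _).sub (hconst _).isBigO)).add
      (hconst (a 0 - L * b 0))).congr_left fun n => by ring
  refine tendsto_sub_nhds_zero_iff.1 (hmain.tendsto_div_nhds_zero.congr' ?_)
  filter_upwards [hb.eventually_gt_atTop 0] with n hn
  rw [sub_div, mul_div_cancel_right₀ _ hn.ne']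

theorem log_add_one_sub_log_le {x : ℝ} (hx : 0 < x) : log (x + 1) - log x ≤ x⁻¹ := by
  have := log_le_sub_one_of_pos (show 0 < (x + 1) / x by positivity)
  rwa [log_div (by positivity) hx.ne', add_div, div_self hx.ne', one_div,
    add_sub_cancel_left] at this

theorem tendsto_mul_log_add_one_sub_log :
    Tendsto (fun x : ℝ => x * (log (x + 1) - log x)) atTop (𝓝 1) := by
  refine (tendsto_mul_log_one_add_div_atTop 1).congr' ?_
  filter_upwards [eventually_gt_atTop 0] with x hx
  rw [← log_div (by positivity) hx.ne', add_div, div_self hx.ne', add_comm]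

namespace GreedyChoice

/-- The defining relation at `k = n + 1`, which avoids the truncated `k - 1`. -/
def Recurrence (p : ℕ → ℝ) : Prop :=
  ∀ n : ℕ, ((n : ℝ) + 2) * p n ^ 2 - ((n : ℝ) + 1) * p (n + 1) ^ 2 - 2 * p (n + 1) + 1 = 0

variable {p : ℕ → ℝ}

theorem sub_mul_eq (hrec : Recurrence p) (n : ℕ) :
    (p (n + 1) - p n) * (1 + (n + 2) * p n + (n + 1) * p (n + 1)) =
      (1 - p n) * (1 - p (n + 1)) := by
  linear_combination -hrec n

theorem inv_one_sub_succ_sub (hmem : ∀ n, p n ∈ Set.Ico 0 1) (hrec : Recurrence p) (n : ℕ) :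
    (1 - p (n + 1))⁻¹ - (1 - p n)⁻¹ = (1 + (n + 2) * p n + (n + 1) * p (n + 1))⁻¹ := by
  obtain ⟨h0, h1⟩ := hmem n
  obtain ⟨h0', h1'⟩ := hmem (n + 1)
  have hD : 0 < 1 + (n + 2) * p n + (n + 1) * p (n + 1) := by positivity
  have hq : 1 - p n ≠ 0 := by linarith
  have hq' : 1 - p (n + 1) ≠ 0 := by linarith
  field_simp
  linear_combination sub_mul_eq hrec n

theorem tendsto_inv_one_sub_atTop (hmem : ∀ n, p n ∈ Set.Ico 0 1) (hrec : Recurrence p) :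
    Tendsto (fun n => (1 - p n)⁻¹) atTop atTop := by
  refine tendsto_atTop_of_const_mul_sub_le_sub (b := fun n : ℕ => log ((n : ℝ) + 1))
    (c := 4⁻¹) (by norm_num) (tendsto_log_atTop.comp
      (tendsto_atTop_add_const_right _ 1 tendsto_natCast_atTop_atTop)) fun n => ?_
  obtain ⟨h0, h1⟩ := hmem n
  obtain ⟨h0', h1'⟩ := hmem (n + 1)
  have hlog := log_add_one_sub_log_le (x := (n : ℝ) + 1) (by positivity)
  rw [inv_one_sub_succ_sub hmem hrec n]
  push_cast
  calc 4⁻¹ * (log ((n : ℝ) + 1 + 1) - log ((n : ℝ) + 1))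
      ≤ (4 * ((n : ℝ) + 1))⁻¹ := by rw [mul_inv]; gcongr
    _ ≤ (1 + (n + 2) * p n + (n + 1) * p (n + 1))⁻¹ := by
      gcongr
      nlinarith

theorem tendsto_one (hmem : ∀ n, p n ∈ Set.Ico 0 1) (hrec : Recurrence p) :
    Tendsto p atTop (𝓝 1) := by
  have h := (tendsto_inv_one_sub_atTop hmem hrec).inv_tendsto_atTop
  simpa using (tendsto_const_nhds (x := (1 : ℝ))).sub h

theorem tendsto_mul_inv_one_sub_succ_sub (hmem : ∀ n, p n ∈ Set.Ico 0 1)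
    (hrec : Recurrence p) :
    Tendsto (fun n : ℕ => ((n : ℝ) + 1) * ((1 - p (n + 1))⁻¹ - (1 - p n)⁻¹))
      atTop (𝓝 2⁻¹) := by
  have hp := tendsto_one hmem hrec
  have hp1 : Tendsto (fun n => p (n + 1)) atTop (𝓝 1) := hp.comp (tendsto_add_atTop_nat 1)
  have hinv : Tendsto (fun n : ℕ => ((n : ℝ) + 1)⁻¹) atTop (𝓝 0) :=
    tendsto_inv_atTop_zero.comp (tendsto_atTop_add_const_right _ 1 tendsto_natCast_atTop_atTop)
  have hD : Tendsto
      (fun n : ℕ => ((n : ℝ) + 1)⁻¹ + (1 + ((n : ℝ) + 1)⁻¹) * p n + p (n + 1))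
      atTop (𝓝 2) := by
    convert (hinv.add (((tendsto_const_nhds (x := (1 : ℝ))).add hinv).mul hp)).add hp1 using 2
    norm_num
  refine (hD.inv₀ two_ne_zero).congr fun n => ?_
  rw [inv_one_sub_succ_sub hmem hrec n]
  field_simp
  ring

theorem tendsto_inv_one_sub_div_log (hmem : ∀ n, p n ∈ Set.Ico 0 1) (hrec : Recurrence p) :
    Tendsto (fun n : ℕ => (1 - p n)⁻¹ / log ((n : ℝ) + 1)) atTop (𝓝 2⁻¹) := by
  have hlog : Tendsto
      (fun n : ℕ => ((n : ℝ) + 1) * (log ((n : ℝ) + 1 + 1) - log ((n : ℝ) + 1)))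
      atTop (𝓝 1) :=
    tendsto_mul_log_add_one_sub_log.comp
      (tendsto_atTop_add_const_right _ 1 tendsto_natCast_atTop_atTop)
  refine tendsto_div_of_tendsto_sub_div_sub (fun m n hmn => ?_) (tendsto_log_atTop.comp
      (tendsto_atTop_add_const_right _ 1 tendsto_natCast_atTop_atTop)) ?_
  · have : (m : ℝ) < n := by exact_mod_cast hmn
    exact log_lt_log (by positivity) (by linarith)
  · simpa only [div_one] using
      ((tendsto_mul_inv_one_sub_succ_sub hmem hrec).div hlog one_ne_zero).congr
      fun n => by push_cast; exact mul_div_mul_left _ _ (by positivity)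

end GreedyChoice

/-- Greedy choice with `r = 2`, `s = 1`: here `p_0 = 0` and `p_k` is the unique
solution in `(0,1)` of `(k+1)p_{k-1}² - kp_k² - 2p_k + 1 = 0`. Then
`(1 - p_k)·log(k+1) → 2` as `k → ∞`. -/
theorem stmt_15 (p : ℕ → ℝ) (hp0 : p 0 = 0)
    (hp : ∀ k, 1 ≤ k → p k ∈ Set.Ioo (0 : ℝ) 1 ∧
      ((k : ℝ) + 1) * p (k - 1) ^ 2 - (k : ℝ) * p k ^ 2 - 2 * p k + 1 = 0) :
    Filter.Tendsto (fun k : ℕ => (1 - p k) * Real.log ((k : ℝ) + 1))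
      Filter.atTop (nhds 2) := by
  have hmem : ∀ n, p n ∈ Set.Ico 0 1
    | 0 => by simp [hp0]
    | n + 1 => Set.Ioo_subset_Ico_self (hp (n + 1) n.succ_pos).1
  have hrec : GreedyChoice.Recurrence p := fun n => by
    have h := (hp (n + 1) n.succ_pos).2
    rw [Nat.add_sub_cancel] at h
    push_cast at h
    linear_combination h
  have h := (GreedyChoice.tendsto_inv_one_sub_div_log hmem hrec).inv₀ (by norm_num)
  rw [inv_inv] at h
  exact h.congr fun k => by rw [inv_div, div_inv_eq_mul, mul_comm]
end

section
/- For the greedy-choice sequence with r = 2 and s = 1: for every integer k ≥ 2, p_k > 1 − 2/log(k+1). -/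
/-!
Write `b x = 1 - 2 / log x`. Since `x ↦ k x ^ 2 + 2 x` is increasing on `x ≥ 0`, the recurrence
`k p_k ^ 2 + 2 p_k = (k + 1) p_{k-1} ^ 2 + 1` gives `p_k > t` as soon as
`k t ^ 2 + 2 t - 1 < (k + 1) p_{k-1} ^ 2`. For `k ≥ 8` the sequence `b (k + 1)` is a sub-solution,
`k b(k+1) ^ 2 + 2 b(k+1) - 1 ≤ (k + 1) b(k) ^ 2`, because `log (k + 1) - log k` lies between
`1 / (k + 1)` and `1 / k`; so the bound propagates by induction from `k = 7`, where
`7 b(8) ^ 2 + 2 b(8) - 1 < 0`. For `k ≤ 6` the bound is negative, as `log 7 < 2`.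
-/

open Real

lemma lt_of_mul_sq_add_two_mul_lt {N t x : ℝ} (hN : 0 ≤ N) (hx : 0 < x)
    (h : N * t ^ 2 + 2 * t < N * x ^ 2 + 2 * x) : t < x := by
  by_contra! hxt
  nlinarith [mul_le_mul_of_nonneg_left (pow_le_pow_left₀ hx.le hxt 2) hN]

lemma seven_lt_exp_two : (7 : ℝ) < exp 2 := by
  have : exp 2 = exp 1 * exp 1 := by rw [← exp_add]; norm_num
  nlinarith [exp_one_gt_d9]

lemma exp_two_lt_eight : exp 2 < 8 := by
  have : exp 2 = exp 1 * exp 1 := by rw [← exp_add]; norm_num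
  nlinarith [exp_one_lt_d9, exp_pos 1]

lemma log_lt_two_of_le_seven {x : ℝ} (hx : 0 < x) (hx7 : x ≤ 7) : log x < 2 :=
  (log_lt_iff_lt_exp hx).2 (hx7.trans_lt seven_lt_exp_two)

lemma one_sub_two_div_log_neg {x : ℝ} (hx1 : 1 < x) (hx7 : x ≤ 7) : 1 - 2 / log x < 0 := by
  have hlog := log_pos hx1
  have : 1 < 2 / log x := (one_lt_div hlog).2 (log_lt_two_of_le_seven (by linarith) hx7)
  linarith

lemma two_lt_log_of_eight_le {x : ℝ} (hx8 : 8 ≤ x) : 2 < log x :=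
  (lt_log_iff_exp_lt (by linarith)).2 (exp_two_lt_eight.trans_le hx8)

lemma log_eight_lt : log 8 < 8 / 3 := by
  have : log 8 = 3 * log 2 := by
    rw [show (8 : ℝ) = 2 ^ 3 by norm_num, log_pow]; norm_num
  linarith [log_two_lt_d9]

lemma one_sub_two_div_log_pos {x : ℝ} (hx8 : 8 ≤ x) : 0 < 1 - 2 / log x := by
  have h2 := two_lt_log_of_eight_le hx8
  rw [sub_pos, div_lt_one (by linarith)]
  exact h2

lemma seven_mul_sq_one_sub_two_div_log_eight_neg :
    7 * (1 - 2 / log 8) ^ 2 + 2 * (1 - 2 / log 8) - 1 < 0 := by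
  have ht0 := one_sub_two_div_log_pos (le_refl (8 : ℝ))
  have ht1 : 1 - 2 / log 8 < 1 / 4 := by
    have h2 := two_lt_log_of_eight_le (le_refl (8 : ℝ))
    rw [sub_lt_comm, lt_div_iff₀ (by linarith)]
    linarith [log_eight_lt]
  nlinarith

lemma one_le_mul_log_add_one_sub_log {x : ℝ} (hx : 0 < x) :
    1 ≤ (x + 1) * (log (x + 1) - log x) := by
  have h := one_sub_inv_le_log_of_pos (div_pos (by linarith : 0 < x + 1) hx)
  rw [log_div (by linarith) hx.ne', inv_div] at h
  have : (x + 1) * (1 - x / (x + 1)) = 1 := by field_simp; ring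
  nlinarith

lemma mul_log_add_one_sub_log_le_one {x : ℝ} (hx : 0 < x) :
    x * (log (x + 1) - log x) ≤ 1 := by
  have h := log_le_sub_one_of_pos (div_pos (by linarith : 0 < x + 1) hx)
  rw [log_div (by linarith) hx.ne'] at h
  have : x * ((x + 1) / x - 1) = 1 := by field_simp; ring
  nlinarith

lemma mul_sq_one_sub_two_div_le {n A L : ℝ} (hA : 2 < A) (hAn : A ≤ n)
    (hgap₁ : 1 ≤ (n + 1) * (L - A)) (hgap₂ : n * (L - A) ≤ 1) :
    n * (1 - 2 / L) ^ 2 + 2 * (1 - 2 / L) - 1 ≤ (n + 1) * (1 - 2 / A) ^ 2 := by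
  set d := L - A with hd
  have hd0 : 0 < d := by nlinarith
  have hdA : d * A ≤ 1 := by nlinarith
  have hm : (n + 1) * d ≤ 1 + d := by nlinarith
  have hE : 0 < A ^ 2 + (n + 1) * d * A * (2 - A) + (n + 1) * d ^ 2 * (1 - A) := by
    nlinarith
  have key : (n + 1) * (1 - 2 / A) ^ 2 - (n * (1 - 2 / L) ^ 2 + 2 * (1 - 2 / L) - 1)
      = 4 * (A ^ 2 + (n + 1) * d * A * (2 - A) + (n + 1) * d ^ 2 * (1 - A)) / (A ^ 2 * L ^ 2) := by
    have : L = A + d := by rw [hd]; ring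
    rw [this]
    field_simp
    ring
  have : 0 ≤ 4 * (A ^ 2 + (n + 1) * d * A * (2 - A) + (n + 1) * d ^ 2 * (1 - A)) / (A ^ 2 * L ^ 2) := by
    positivity
  linarith

lemma one_sub_two_div_log_step {x : ℝ} (hx : 8 ≤ x) :
    x * (1 - 2 / log (x + 1)) ^ 2 + 2 * (1 - 2 / log (x + 1)) - 1
      ≤ (x + 1) * (1 - 2 / log x) ^ 2 := by
  have hx0 : 0 < x := by linarith
  exact mul_sq_one_sub_two_div_le (two_lt_log_of_eight_le hx)
    (by linarith [log_le_sub_one_of_pos hx0]) (one_le_mul_log_add_one_sub_log hx0)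
    (mul_log_add_one_sub_log_le_one hx0)

theorem stmt_16_general (p : ℕ → ℝ)
    (hp : ∀ k, 1 ≤ k → p k ∈ Set.Ioo (0 : ℝ) 1 ∧
      ((k : ℝ) + 1) * p (k - 1) ^ 2 - (k : ℝ) * p k ^ 2 - 2 * p k + 1 = 0) :
    ∀ k : ℕ, 2 ≤ k → 1 - 2 / Real.log ((k : ℝ) + 1) < p k := by
  intro k hk
  rcases le_or_gt k 6 with hk6 | hk7
  · have hk' : (2 : ℝ) ≤ k := by exact_mod_cast hk
    have hk6' : (k : ℝ) ≤ 6 := by exact_mod_cast hk6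
    exact (one_sub_two_div_log_neg (by linarith) (by linarith)).trans (hp k (by omega)).1.1
  clear hk
  induction k, hk7 using Nat.le_induction with
  | base =>
    obtain ⟨⟨hpos, -⟩, hrec⟩ := hp 7 (by norm_num)
    norm_num at hrec ⊢
    refine lt_of_mul_sq_add_two_mul_lt (N := 7) (by norm_num) hpos ?_
    nlinarith [seven_mul_sq_one_sub_two_div_log_eight_neg, sq_nonneg (p 6)]
  | succ n hn ih =>
    obtain ⟨⟨hpos, -⟩, hrec⟩ := hp (n + 1) (by omega)
    simp only [Nat.add_sub_cancel] at hrec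
    push_cast at hrec ⊢
    have hn8 : (8 : ℝ) ≤ n + 1 := by exact_mod_cast Nat.succ_le_succ hn
    have hstep := one_sub_two_div_log_step hn8
    have hsq := pow_lt_pow_left₀ ih (one_sub_two_div_log_pos hn8).le two_ne_zero
    refine lt_of_mul_sq_add_two_mul_lt (N := (n : ℝ) + 1) (by positivity) hpos ?_
    nlinarith

/-- Greedy choice with `r = 2`, `s = 1`: for every integer `k ≥ 2`,
`p_k > 1 - 2/log(k+1)`. -/
theorem stmt_16 (p : ℕ → ℝ) (hp0 : p 0 = 0)
    (hp : ∀ k, 1 ≤ k → p k ∈ Set.Ioo (0 : ℝ) 1 ∧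
      ((k : ℝ) + 1) * p (k - 1) ^ 2 - (k : ℝ) * p k ^ 2 - 2 * p k + 1 = 0) :
    ∀ k : ℕ, 2 ≤ k → 1 - 2 / Real.log ((k : ℝ) + 1) < p k :=
  stmt_16_general p hp
end

section
/- For the greedy-choice sequence with r = 2 and s = 1: the sequence a_k = (1 − p_k)·log(k+1) converges to some limit α with 1 ≤ α ≤ 2, and if α < 2 then a_k is strictly increasing for all sufficiently large k. -/
/-!
Write `s k = 1 - p k ^ 2`. The recurrence becomes
`s (k + 1) = s k - (1 - p (k + 1)) ^ 2 / (k + 2)`, so `s` decreases; as `1 - p k ≥ s k / 2` and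
the harmonic series diverges, `s k → 0` and `p k → 1`. Then
`1 / s (k + 1) - 1 / s k ∼ 1 / (4 (k + 2))`, so Stolz–Cesàro against `log (k + 1)` gives
`1 / s k ∼ log k / 4`, and `1 - p k = s k / (1 + p k) ∼ 2 / log k`. Hence `α = 2`.
-/

open Filter Topology Asymptotics Real

theorem tendsto_div_of_tendsto_sub_div_sub_s18 {y L : ℕ → ℝ} {c : ℝ} (hL : StrictMono L)
    (hL_top : Tendsto L atTop atTop)
    (h : Tendsto (fun k => (y (k + 1) - y k) / (L (k + 1) - L k)) atTop (𝓝 c)) :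
    Tendsto (fun k => y k / L k) atTop (𝓝 c) := by
  set e : ℕ → ℝ := fun k => y k - c * L k
  have hΔL : ∀ k, 0 < L (k + 1) - L k := fun k => sub_pos.2 (hL k.lt_succ_self)
  have hΔe : (fun k => e (k + 1) - e k) =o[atTop] fun k => L (k + 1) - L k := by
    rw [isLittleO_iff_tendsto fun k hk => absurd hk (hΔL k).ne']
    refine (tendsto_sub_nhds_zero_iff.2 h).congr fun k => ?_
    field_simp [(hΔL k).ne']
    ring
  have hsum := hΔe.sum_range (fun k => (hΔL k).le) <|
    (tendsto_atTop_add_const_right _ (-L 0) hL_top).congr fun k => by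
      rw [Finset.sum_range_sub, sub_eq_add_neg]
  simp only [Finset.sum_range_sub] at hsum
  have hconst : ∀ a : ℝ, (fun _ : ℕ => a) =o[atTop] L := fun a =>
    isLittleO_const_left.2 (Or.inr (tendsto_norm_atTop_atTop.comp hL_top))
  have he : e =o[atTop] L :=
    ((hsum.trans_isBigO ((isBigO_refl L _).sub (hconst (L 0)).isBigO)).add
      (hconst (e 0))).congr_left fun k => sub_add_cancel _ _
  rw [← tendsto_sub_nhds_zero_iff]
  refine ((isLittleO_iff_tendsto' ?_).1 he).congr' ?_
  · filter_upwards [hL_top.eventually_ne_atTop 0] with k hk h0 using absurd h0 hk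
  · filter_upwards [hL_top.eventually_ne_atTop 0] with k hk
    simp only [e]
    field_simp

theorem tendsto_mul_log_add_two_sub_log_add_one :
    Tendsto (fun k : ℕ => ((k : ℝ) + 2) * (log ((k : ℝ) + 2) - log ((k : ℝ) + 1)))
      atTop (𝓝 1) := by
  have hupper : Tendsto (fun k : ℕ => 1 + 1 / ((k : ℝ) + 1)) atTop (𝓝 1) := by
    simpa using tendsto_one_div_add_atTop_nhds_zero_nat.const_add (1 : ℝ)
  refine tendsto_of_tendsto_of_tendsto_of_le_of_le tendsto_const_nhds hupper (fun k => ?_)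
    fun k => ?_
  all_goals
    have hk : (0 : ℝ) < (k : ℝ) + 1 := by positivity
    rw [← log_div (by positivity) hk.ne']
  · calc (1 : ℝ) = ((k : ℝ) + 2) * (1 - (((k : ℝ) + 2) / ((k : ℝ) + 1))⁻¹) := by
          field_simp; ring
      _ ≤ _ := by gcongr; exact one_sub_inv_le_log_of_pos (by positivity)
  · calc _ ≤ ((k : ℝ) + 2) * (((k : ℝ) + 2) / ((k : ℝ) + 1) - 1) := by
          gcongr; exact log_le_sub_one_of_pos (by positivity)
      _ = _ := by field_simp; ring

theorem one_sub_sq_eq_mul {R : Type*} [CommRing R] (a : R) : 1 - a ^ 2 = (1 - a) * (1 + a) := by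
  ring

structure IsGreedySequence (p : ℕ → ℝ) : Prop where
  nonneg : ∀ k, 0 ≤ p k
  lt_one : ∀ k, p k < 1
  recurrence : ∀ k : ℕ,
    ((k : ℝ) + 2) * p k ^ 2 - ((k : ℝ) + 1) * p (k + 1) ^ 2 - 2 * p (k + 1) + 1 = 0

namespace IsGreedySequence

variable {p : ℕ → ℝ}

theorem one_sub_sq_succ (hp : IsGreedySequence p) (k : ℕ) :
    1 - p (k + 1) ^ 2 = 1 - p k ^ 2 - (1 - p (k + 1)) ^ 2 / ((k : ℝ) + 2) := by
  field_simp
  linear_combination hp.recurrence k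

theorem one_sub_sq_nonneg (hp : IsGreedySequence p) (k : ℕ) : 0 ≤ 1 - p k ^ 2 := by
  rw [one_sub_sq_eq_mul]
  exact mul_nonneg (sub_nonneg.2 (hp.lt_one k).le) (by linarith [hp.nonneg k])

theorem antitone_one_sub_sq (hp : IsGreedySequence p) : Antitone fun k => 1 - p k ^ 2 :=
  antitone_nat_of_succ_le fun k => by
    rw [hp.one_sub_sq_succ k, sub_le_self_iff]
    positivity

theorem summable_one_sub_sq_div (hp : IsGreedySequence p) :
    Summable fun k : ℕ => (1 - p (k + 1)) ^ 2 / ((k : ℝ) + 2) :=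
  summable_of_sum_range_le (c := 1 - p 0 ^ 2) (fun k => by positivity) fun n => by
    have hdrop : ∀ k : ℕ, (1 - p (k + 1)) ^ 2 / ((k : ℝ) + 2) =
        (1 - p k ^ 2) - (1 - p (k + 1) ^ 2) := fun k => by
      rw [hp.one_sub_sq_succ k]; ring
    simp only [hdrop, Finset.sum_range_sub']
    linarith [hp.one_sub_sq_nonneg n]

theorem tendsto_one_sub_sq_nhds_zero (hp : IsGreedySequence p) :
    Tendsto (fun k => 1 - p k ^ 2) atTop (𝓝 0) := by
  obtain ⟨Λ, hlim⟩ : ∃ Λ, Tendsto (fun k => 1 - p k ^ 2) atTop (𝓝 Λ) :=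
    ⟨_, tendsto_atTop_ciInf hp.antitone_one_sub_sq ⟨0, by
      rintro _ ⟨k, rfl⟩; exact hp.one_sub_sq_nonneg k⟩⟩
  obtain rfl | hΛ := (ge_of_tendsto' hlim hp.one_sub_sq_nonneg).eq_or_lt
  · exact hlim
  -- otherwise `1 - p k ≥ Λ / 2` for all `k`, and the summable series dominates the harmonic one
  refine absurd ((summable_nat_add_iff 2).1 ?_) Real.not_summable_one_div_natCast
  refine (hp.summable_one_sub_sq_div.div_const ((Λ / 2) ^ 2)).of_nonneg_of_le
    (fun k => by positivity) fun k => ?_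
  have hq : Λ / 2 ≤ 1 - p (k + 1) := by
    have := hp.antitone_one_sub_sq.le_of_tendsto hlim (k + 1)
    nlinarith [one_sub_sq_eq_mul (p (k + 1)), hp.lt_one (k + 1)]
  have hk : (0 : ℝ) < (k : ℝ) + 2 := by positivity
  push_cast
  rw [le_div_iff₀ (by positivity), div_mul_eq_mul_div, div_le_div_iff_of_pos_right hk, one_mul]
  gcongr

theorem tendsto_one_sub_nhds_zero (hp : IsGreedySequence p) :
    Tendsto (fun k => 1 - p k) atTop (𝓝 0) :=
  squeeze_zero (fun k => sub_nonneg.2 (hp.lt_one k).le)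
    (fun k => by nlinarith [hp.nonneg k, hp.lt_one k]) hp.tendsto_one_sub_sq_nhds_zero

theorem inv_one_sub_sq_succ_sub (hp : IsGreedySequence p) (k : ℕ) :
    (1 - p (k + 1) ^ 2)⁻¹ - (1 - p k ^ 2)⁻¹ =
      (((k : ℝ) + 2) *
        ((1 + p (k + 1)) * (1 + p (k + 1) + (1 - p (k + 1)) / ((k : ℝ) + 2))))⁻¹ := by
  have h1 : 0 < 1 - p (k + 1) := sub_pos.2 (hp.lt_one _)
  have h2 : 0 < 1 + p (k + 1) := by linarith [hp.nonneg (k + 1)]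
  have hk : (0 : ℝ) < k + 2 := by positivity
  have hs : 1 - p k ^ 2 =
      (1 - p (k + 1)) * (1 + p (k + 1) + (1 - p (k + 1)) / ((k : ℝ) + 2)) := by
    linear_combination -(hp.one_sub_sq_succ k)
  rw [hs, one_sub_sq_eq_mul]
  field_simp
  ring

theorem tendsto_inv_one_sub_sq_div_log (hp : IsGreedySequence p) :
    Tendsto (fun k : ℕ => (1 - p k ^ 2)⁻¹ / log ((k : ℝ) + 1)) atTop (𝓝 (1 / 4)) := by
  have hL_mono : StrictMono fun k : ℕ => log ((k : ℝ) + 1) := fun a b hab =>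
    log_lt_log (by positivity) (by gcongr)
  have hL_top : Tendsto (fun k : ℕ => log ((k : ℝ) + 1)) atTop atTop :=
    tendsto_log_atTop.comp (tendsto_atTop_add_const_right _ 1 tendsto_natCast_atTop_atTop)
  refine tendsto_div_of_tendsto_sub_div_sub_s18 hL_mono hL_top ?_
  have hp_succ : Tendsto (fun k => p (k + 1)) atTop (𝓝 1) := by
    simpa using (hp.tendsto_one_sub_nhds_zero.comp (tendsto_add_atTop_nat 1)).const_sub 1
  have hgap : Tendsto (fun k : ℕ => (1 - p (k + 1)) / ((k : ℝ) + 2)) atTop (𝓝 0) :=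
    (hp.tendsto_one_sub_nhds_zero.comp (tendsto_add_atTop_nat 1)).div_atTop
      (tendsto_atTop_add_const_right _ 2 tendsto_natCast_atTop_atTop)
  have hA := ((hp_succ.const_add 1).mul ((hp_succ.const_add 1).add hgap)).inv₀ (by norm_num)
  convert hA.div tendsto_mul_log_add_two_sub_log_add_one one_ne_zero using 2 with k
  · push_cast
    rw [hp.inv_one_sub_sq_succ_sub k, Pi.div_apply, add_assoc (k : ℝ), one_add_one_eq_two,
      mul_inv, inv_mul_eq_div, div_mul_eq_div_div]
  · norm_num

theorem tendsto_one_sub_mul_log (hp : IsGreedySequence p) :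
    Tendsto (fun k : ℕ => (1 - p k) * log ((k : ℝ) + 1)) atTop (𝓝 2) := by
  have hp_lim : Tendsto p atTop (𝓝 1) := by
    simpa using hp.tendsto_one_sub_nhds_zero.const_sub 1
  have hlim := ((hp_lim.const_add 1).inv₀ (by norm_num)).div hp.tendsto_inv_one_sub_sq_div_log
    (by norm_num)
  convert hlim using 1
  · funext k
    have : 1 + p k ≠ 0 := by linarith [hp.nonneg k]
    rw [Pi.div_apply, one_sub_sq_eq_mul, div_div_eq_mul_div, div_inv_eq_mul]
    field_simp
  · norm_num

end IsGreedySequence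

/-- Greedy choice with `r = 2`, `s = 1`: the sequence `a_k = (1 - p_k)·log(k+1)`
converges to some limit `α` with `1 ≤ α ≤ 2`, and if `α < 2` then `a_k` is
strictly increasing for all sufficiently large `k`. -/
theorem stmt_18 (p : ℕ → ℝ) (hp0 : p 0 = 0)
    (hp : ∀ k, 1 ≤ k → p k ∈ Set.Ioo (0 : ℝ) 1 ∧
      ((k : ℝ) + 1) * p (k - 1) ^ 2 - (k : ℝ) * p k ^ 2 - 2 * p k + 1 = 0) :
    ∃ α : ℝ, 1 ≤ α ∧ α ≤ 2 ∧
      Filter.Tendsto (fun k : ℕ => (1 - p k) * Real.log ((k : ℝ) + 1))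
        Filter.atTop (nhds α) ∧
      (α < 2 → ∃ K : ℕ, ∀ k : ℕ, K ≤ k →
        (1 - p k) * Real.log ((k : ℝ) + 1)
          < (1 - p (k + 1)) * Real.log ((k : ℝ) + 2)) := by
  have hgreedy : IsGreedySequence p := by
    refine ⟨fun k => ?_, fun k => ?_, fun k => ?_⟩
    · rcases k with _ | k
      exacts [hp0.ge, (hp (k + 1) k.succ_pos).1.1.le]
    · rcases k with _ | k
      exacts [hp0 ▸ one_pos, (hp (k + 1) k.succ_pos).1.2]
    · have h := (hp (k + 1) k.succ_pos).2
      push_cast [Nat.add_sub_cancel] at h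
      linear_combination h
  exact ⟨2, one_le_two, le_rfl, hgreedy.tendsto_one_sub_mul_log,
    fun h => absurd h (lt_irrefl 2)⟩
end
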